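/- Global symmetry of translationally invariant injective MPS: Let A be an injective MPS tensor on n ≥ 3 sites and U a unitary on ℂ^d such that U^{⊗n}|Ψ⟩ = |Ψ⟩ where |Ψ⟩ = ∑Tr(A^{i₁}⋯A^{i_n})|i₁…i_n⟩. Then there exist an invertible matrix Z and a scalar λ with λⁿ = 1 such that ∑_{i'} U_{i,i'} A^{i'} = λ Z⁻¹ A^{i} Z for all i. -/

import Mathlib

/-!
Write `α c = ∑ i, c i • A i`. Injectivity of `A` makes `α` surjective, and the symmetry says that
`α` and `c ↦ α (c ᵥ* U)` have the same traces of `n`-fold products. Hence `A i ↦ ∑ U i i' • A i'`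
extends to a linear map `Φ` on matrices with `tr (Φ X₁ ⋯ Φ Xₙ) = tr (X₁ ⋯ Xₙ)`. For `n ≥ 3`
such a `Φ` is bijective and, pairing against a third factor, `Φ X * Φ Y = Φ (X * Y) * Φ 1`,
which makes `Φ 1 = μ • 1` central. So `μ⁻¹ • Φ` is an algebra automorphism of the matrix
algebra, hence inner (Skolem–Noether), and `μ ^ n = 1` follows by evaluating on a rank-one
idempotent.
-/

open Matrix

namespace Matrix

variable {K ι : Type*} [Field K] [Fintype ι]

theorem exists_eq_trace_mul (f : Module.Dual K (Matrix ι ι K)) :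
    ∃ X, ∀ M, f M = (M * X).trace := by
  let τ : Matrix ι ι K →ₗ[K] Module.Dual K (Matrix ι ι K) :=
    (LinearMap.mul K (Matrix ι ι K)).flip.compr₂ (traceLinearMap ι K K)
  have hτ : Function.Injective τ := fun X Y h =>
    ext_iff_trace_mul_left.mpr fun M => congr($h M)
  obtain ⟨X, rfl⟩ :=
    (LinearMap.injective_iff_surjective_of_finrank_eq_finrank Subspace.dual_finrank_eq.symm).mp
      hτ f
  exact ⟨X, fun M => rfl⟩

theorem span_range_eq_top_of_injective_trace {κ : Type*} (A : κ → Matrix ι ι K)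
    (hA : Function.Injective fun X : Matrix ι ι K => fun i => (A i * Xᵀ).trace) :
    Submodule.span K (Set.range A) = ⊤ := by
  by_contra hne
  obtain ⟨f, hf0, hle⟩ := Submodule.exists_le_ker_of_lt_top _ (lt_top_iff_ne_top.mpr hne)
  obtain ⟨X, hX⟩ := exists_eq_trace_mul f
  have hX0 : Xᵀ = 0 := hA <| funext fun i => by
    simpa [hX] using hle (Submodule.subset_span (Set.mem_range_self i))
  rw [transpose_eq_zero] at hX0
  exact hf0 <| LinearMap.ext fun M => by simp [hX, hX0]

variable [DecidableEq ι]

theorem _root_.AlgEquiv.exists_units_conj_matrix (f : Matrix ι ι K ≃ₐ[K] Matrix ι ι K) :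
    ∃ u : (Matrix ι ι K)ˣ, ∀ X, f X = u * X * u⁻¹ := by
  obtain ⟨T, hT⟩ :=
    ((toLinAlgEquiv'.symm.trans f).trans toLinAlgEquiv').eq_linearEquivConjAlgEquiv
  refine ⟨⟨LinearMap.toMatrixAlgEquiv' T, LinearMap.toMatrixAlgEquiv' T.symm, ?_, ?_⟩,
    fun X => ?_⟩
  · simp [← map_mul, Module.End.mul_eq_comp]
  · simp [← map_mul, Module.End.mul_eq_comp]
  · have := congr(LinearMap.toMatrixAlgEquiv' ($hT (toLinAlgEquiv' X)))
    simpa [LinearEquiv.conjAlgEquiv_apply, LinearMap.toMatrixAlgEquiv'_comp, mul_assoc] using this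

def PreservesWordTrace (n : ℕ) (Φ : Matrix ι ι K →ₗ[K] Matrix ι ι K) : Prop :=
  ∀ X : Fin n → Matrix ι ι K, (List.ofFn fun k => Φ (X k)).prod.trace = (List.ofFn X).prod.trace

theorem _root_.LinearMap.exists_units_conj_of_map_mul {Φ : Matrix ι ι K →ₗ[K] Matrix ι ι K}
    (hΦ : Function.Bijective Φ) {μ : K} (hμ : μ ≠ 0) (h1 : Φ 1 = μ • 1)
    (hmul : ∀ X Y, Φ X * Φ Y = μ • Φ (X * Y)) :
    ∃ u : (Matrix ι ι K)ˣ, ∀ X, Φ X = μ • (u * X * u⁻¹ : Matrix ι ι K) := by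
  let ψ : Matrix ι ι K →ₐ[K] Matrix ι ι K := AlgHom.ofLinearMap (μ⁻¹ • Φ)
    (by simp [h1, hμ]) (fun X Y => by simp [hmul, smul_smul, hμ])
  have hψ : Function.Bijective ψ :=
    ⟨fun X Y h => hΦ.1 (smul_right_injective _ (inv_ne_zero hμ) h), fun M =>
      (hΦ.2 (μ • M)).imp fun X hX => by simp [ψ, hX, hμ]⟩
  obtain ⟨u, hu⟩ := (AlgEquiv.ofBijective ψ hψ).exists_units_conj_matrix
  exact ⟨u, fun X => (inv_smul_eq_iff₀ hμ).mp (hu X)⟩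

namespace PreservesWordTrace

variable {n m : ℕ} {Φ : Matrix ι ι K →ₗ[K] Matrix ι ι K}

theorem trace_mul_mul_mul_pow (hΦ : PreservesWordTrace (m + 3) Φ) (X Y Z W : Matrix ι ι K) :
    (Φ X * Φ Y * Φ Z * Φ W ^ m).trace = (X * Y * Z * W ^ m).trace := by
  simpa [List.ofFn_succ, mul_assoc] using hΦ (Fin.cons X (Fin.cons Y (Fin.cons Z fun _ => W)))

theorem injective (hΦ : PreservesWordTrace (m + 3) Φ) : Function.Injective Φ := by
  refine (injective_iff_map_eq_zero Φ).mpr fun X hX => ext_iff_trace_mul_right.mpr fun Y => ?_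
  simpa [hX] using (hΦ.trace_mul_mul_mul_pow X Y 1 1).symm

theorem surjective (hΦ : PreservesWordTrace (m + 3) Φ) : Function.Surjective Φ :=
  LinearMap.injective_iff_surjective.mp hΦ.injective

theorem map_mul_map (hΦ : PreservesWordTrace (m + 3) Φ) (X Y : Matrix ι ι K) :
    Φ X * Φ Y = Φ (X * Y) * Φ 1 := by
  obtain ⟨J, hJ⟩ := hΦ.surjective 1
  refine ext_iff_trace_mul_right.mpr fun M => ?_
  obtain ⟨Z, rfl⟩ := hΦ.surjective M
  have hXY := hΦ.trace_mul_mul_mul_pow X Y Z J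
  have hXY1 := hΦ.trace_mul_mul_mul_pow (X * Y) 1 Z J
  simp only [hJ, one_pow, mul_one] at hXY hXY1
  rw [hXY, hXY1]

theorem exists_map_one_eq_smul_one (hΦ : PreservesWordTrace (m + 3) Φ) :
    ∃ μ : K, Φ 1 = μ • 1 := by
  have hcenter : Φ 1 ∈ Subalgebra.center K (Matrix ι ι K) :=
    Subalgebra.mem_center_iff.mpr fun M => by
      obtain ⟨X, rfl⟩ := hΦ.surjective M
      rw [hΦ.map_mul_map, hΦ.map_mul_map 1 X, mul_one, one_mul]
  rw [Algebra.IsCentral.center_eq_bot, Algebra.mem_bot] at hcenter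
  obtain ⟨μ, hμ⟩ := hcenter
  exact ⟨μ, by rw [← hμ, Algebra.algebraMap_eq_smul_one]⟩

theorem pow_eq_one [Nonempty ι] (hΦ : PreservesWordTrace (n + 1) Φ) {u : (Matrix ι ι K)ˣ}
    {μ : K} (hu : ∀ X, Φ X = μ • (u * X * u⁻¹ : Matrix ι ι K)) : μ ^ (n + 1) = 1 := by
  inhabit ι
  have hE : IsIdempotentElem (single default default (1 : K) : Matrix ι ι K) := by
    simp [IsIdempotentElem]
  have hword := hΦ fun _ => single default default 1
  rw [List.ofFn_const, List.ofFn_const, List.prod_replicate, List.prod_replicate, hu, smul_pow,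
    Units.conj_pow, hE.pow_succ_eq, trace_smul, trace_units_conj, trace_single_eq_same] at hword
  simpa using hword

theorem exists_units_conj (hΦ : PreservesWordTrace (m + 3) Φ) :
    ∃ (u : (Matrix ι ι K)ˣ) (μ : K), μ ^ (m + 3) = 1 ∧
      ∀ X, Φ X = μ • (u * X * u⁻¹ : Matrix ι ι K) := by
  cases isEmpty_or_nonempty ι
  · exact ⟨1, 1, one_pow _, fun _ => Subsingleton.elim _ _⟩
  obtain ⟨μ, hμ⟩ := hΦ.exists_map_one_eq_smul_one
  have hμ0 : μ ≠ 0 := by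
    rintro rfl
    exact one_ne_zero (hΦ.injective (by rw [hμ, zero_smul, map_zero]))
  obtain ⟨u, hu⟩ := LinearMap.exists_units_conj_of_map_mul ⟨hΦ.injective, hΦ.surjective⟩ hμ0 hμ
    fun X Y => by rw [hΦ.map_mul_map, hμ, mul_smul_one]
  exact ⟨u, μ, hΦ.pow_eq_one hu, hu⟩

end PreservesWordTrace

theorem exists_preservesWordTrace_comp_eq {V : Type*} [AddCommGroup V] [Module K V] {m : ℕ}
    (α β : V →ₗ[K] Matrix ι ι K) (hα : Function.Surjective α) (hβ : Function.Surjective β)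
    (h : ∀ c : Fin (m + 2) → V,
      (List.ofFn fun k => β (c k)).prod.trace = (List.ofFn fun k => α (c k)).prod.trace) :
    ∃ Φ, PreservesWordTrace (m + 2) Φ ∧ Φ ∘ₗ α = β := by
  have hker : ∀ c, α c = 0 → β c = 0 := by
    intro c hc
    obtain ⟨c₁, hc₁⟩ := hβ 1
    refine ext_iff_trace_mul_right.mpr fun Y => ?_
    obtain ⟨c', rfl⟩ := hβ Y
    simpa [List.ofFn_succ, hc, hc₁] using h (Fin.cons c (Fin.cons c' fun _ => c₁))
  obtain ⟨R, hR⟩ := α.exists_rightInverse_of_surjective (LinearMap.range_eq_top.mpr hα)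
  have hΦα : (β ∘ₗ R) ∘ₗ α = β := LinearMap.ext fun c => by
    simpa [sub_eq_zero] using hker (R (α c) - c) (by simp [← LinearMap.comp_apply α R, hR])
  refine ⟨β ∘ₗ R, fun X => ?_, hΦα⟩
  obtain ⟨c, rfl⟩ : ∃ c : Fin (m + 2) → V, (fun k => α (c k)) = X :=
    ⟨fun k => (hα (X k)).choose, funext fun k => (hα (X k)).choose_spec⟩
  simpa only [← LinearMap.comp_apply (β ∘ₗ R) α, hΦα] using h c

theorem trace_prod_ofFn_linearCombination_vecMul {κ : Type*} [Fintype κ] [DecidableEq κ]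
    {n : ℕ} (A : κ → Matrix ι ι K) (U : Matrix κ κ K)
    (hsym : ∀ i : Fin n → κ,
      (∑ j : Fin n → κ, (∏ k : Fin n, U (i k) (j k)) *
          ((List.ofFn fun k => A (j k)).prod).trace) =
        ((List.ofFn fun k => A (i k)).prod).trace)
    (c : Fin n → κ → K) :
    (List.ofFn fun k => Fintype.linearCombination K A (c k ᵥ* U)).prod.trace =
      (List.ofFn fun k => Fintype.linearCombination K A (c k)).prod.trace := by
  let T := (traceLinearMap ι K K).compMultilinearMap (MultilinearMap.mkPiAlgebraFin K n _)
  let α := Fintype.linearCombination K A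
  suffices T.compLinearMap (fun _ => α ∘ₗ U.vecMulLinear) = T.compLinearMap (fun _ => α) from
    congr($this c)
  -- on basis vectors, expanding the multilinear trace `T` turns the left side into that of `hsym`
  refine Module.Basis.ext_multilinear (fun _ => Pi.basisFun K κ) fun i => ?_
  simp only [MultilinearMap.compLinearMap_apply, LinearMap.comp_apply, Pi.basisFun_apply,
    vecMulLinear_apply, single_one_vecMul, α, Fintype.linearCombination_apply, row,
    Pi.single_apply, ite_smul, one_smul, zero_smul, Finset.sum_ite_eq', Finset.mem_univ, if_true,
    MultilinearMap.map_sum, MultilinearMap.map_smul_univ, smul_eq_mul]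
  exact hsym i

end Matrix

/-- a global on-site unitary symmetry of a translationally invariant
injective MPS is implemented by an invertible gauge `Z` and an `n`-th root of unity. -/
theorem global_symmetry_TI_injective_MPS (n d D : ℕ) (hn : 3 ≤ n)
    (A : Fin d → Matrix (Fin D) (Fin D) ℂ)
    (hA : Function.Injective fun X : Matrix (Fin D) (Fin D) ℂ =>
      fun i : Fin d => (A i * Xᵀ).trace)
    (U : Matrix (Fin d) (Fin d) ℂ) (hU : U ∈ Matrix.unitaryGroup (Fin d) ℂ)
    (hsym : ∀ i : Fin n → Fin d,
      (∑ j : Fin n → Fin d, (∏ k : Fin n, U (i k) (j k)) *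
          ((List.ofFn fun k => A (j k)).prod).trace) =
        ((List.ofFn fun k => A (i k)).prod).trace) :
    ∃ (Z W : Matrix (Fin D) (Fin D) ℂ) (lam : ℂ),
      Z * W = 1 ∧ W * Z = 1 ∧ lam ^ n = 1 ∧
      ∀ j : Fin d, (∑ i' : Fin d, U j i' • A i') = lam • (W * A j * Z) := by
  obtain ⟨m, rfl⟩ : ∃ m, n = m + 3 := ⟨n - 3, by omega⟩
  let α := Fintype.linearCombination ℂ A
  have hα : Function.Surjective α := by
    rw [← LinearMap.range_eq_top, Fintype.range_linearCombination]
    exact span_range_eq_top_of_injective_trace A hA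
  have hU' : Function.Surjective U.vecMulLinear := fun v =>
    ⟨v ᵥ* star U, by simp [vecMul_vecMul, mem_unitaryGroup_iff'.mp hU]⟩
  obtain ⟨Φ, hΦ, hΦα⟩ := exists_preservesWordTrace_comp_eq (m := m + 1) α
    (α ∘ₗ U.vecMulLinear) hα (hα.comp hU') (trace_prod_ofFn_linearCombination_vecMul A U hsym)
  obtain ⟨u, μ, hμ, hΦu⟩ := hΦ.exists_units_conj
  refine ⟨↑u⁻¹, u, μ, u.inv_mul, u.mul_inv, hμ, fun j => ?_⟩
  have hΦA : Φ (A j) = ∑ i', U j i' • A i' := by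
    simpa [α, single_one_vecMul, Fintype.linearCombination_apply] using
      DFunLike.congr_fun hΦα (Pi.single j 1)
  rw [← hΦA, hΦu]
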